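/- arXiv:2211.16030 — 8 statements merged into one kernel-verified Lean document; each statement's English description precedes it below -/
import Mathlib

section
/- Let u = (u_1,…,u_k) be a minimizer of the segregated Dirichlet energy problem on a finite graph X with boundary Γ. Then for every x ∈ X with u_i(x) = 0, one has L u_i(x) ≤ 0. -/
open Finset

noncomputable def lap {X : Type*} [Fintype X] (w : X → X → ℝ) (u : X → ℝ) (x : X) : ℝ :=
  ∑ y, w x y * (u x - u y)

noncomputable def dEnergy {X : Type*} [Fintype X] (w : X → X → ℝ) (u : X → ℝ) : ℝ :=
  (1 / 2) * ∑ x, ∑ y, w x y * (u x - u y) ^ 2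

def Adm {X : Type*} {k : ℕ} (Γ : Set X) (φ : Fin k → X → ℝ) (u : Fin k → X → ℝ) : Prop :=
  (∀ i, ∀ x ∈ Γ, u i x = φ i x) ∧ (∀ i x, 0 ≤ u i x) ∧
    (∀ i j, i ≠ j → ∀ x, u i x * u j x = 0)

theorem stmt_4 {X : Type*} [Fintype X] (w : X → X → ℝ)
    (hsym : ∀ x y, w x y = w y x) (hnn : ∀ x y, 0 ≤ w x y)
    (k : ℕ) (Γ : Set X) (φ : Fin k → X → ℝ)
    (u : Fin k → X → ℝ) (hu : Adm Γ φ u)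
    (hmin : ∀ v : Fin k → X → ℝ, Adm Γ φ v →
      ∑ i, dEnergy w (u i) ≤ ∑ i, dEnergy w (v i)) :
    ∀ (i : Fin k) (x : X), u i x = 0 → lap w (u i) x ≤ 0 := by
  intro i x hx
  unfold lap
  apply Finset.sum_nonpos
  intro y _
  rw [hx]
  have := hu.2.1 i y
  nlinarith [hnn x y]
end

section
/- Let u = (u_1,…,u_k) be a minimizer of the segregated Dirichlet energy problem on a finite graph X with boundary Γ. Then for every x ∈ X \ Γ with u_i(x) > 0, one has L u_i(x) = 0, i.e. each component is harmonic in its positivity set away from the boundary. -/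
open Finset

theorem stmt_5 {X : Type*} [Fintype X] (w : X → X → ℝ)
    (hsym : ∀ x y, w x y = w y x) (hnn : ∀ x y, 0 ≤ w x y)
    (k : ℕ) (Γ : Set X) (φ : Fin k → X → ℝ)
    (u : Fin k → X → ℝ) (hu : Adm Γ φ u)
    (hmin : ∀ v : Fin k → X → ℝ, Adm Γ φ v →
      ∑ i, dEnergy w (u i) ≤ ∑ i, dEnergy w (v i)) :
    ∀ (i : Fin k) (x : X), x ∉ Γ → 0 < u i x → lap w (u i) x = 0 := by
  classical
  intro i x hxΓ hpos
  obtain ⟨hbd, hnn', hdisj⟩ := hu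
  set g : X → ℝ := u i with hg
  set c : ℝ := ∑ y ∈ univ.erase x, w x y with hc
  have hc0 : 0 ≤ c := Finset.sum_nonneg fun y _ => hnn x y
  set L : ℝ := lap w g x with hLdef
  -- splitting of the double sum
  have split : ∀ h : X → ℝ, ∑ a, ∑ b, w a b * (h a - h b)^2
      = w x x * (h x - h x)^2 + (∑ b ∈ univ.erase x, w x b * (h x - h b)^2)
        + ∑ a ∈ univ.erase x, (w a x * (h a - h x)^2
            + ∑ b ∈ univ.erase x, w a b * (h a - h b)^2) := by
    intro h
    rw [← Finset.add_sum_erase _ (fun a => ∑ b, w a b * (h a - h b)^2) (mem_univ x),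
        ← Finset.add_sum_erase _ (fun b => w x b * (h x - h b)^2) (mem_univ x)]
    congr 1
    apply Finset.sum_congr rfl
    intro a ha
    rw [← Finset.add_sum_erase _ (fun b => w a b * (h a - h b)^2) (mem_univ x)]
  have lapE : L = ∑ y ∈ univ.erase x, w x y * (g x - g y) := by
    rw [hLdef, lap, ← Finset.add_sum_erase _ (fun y => w x y * (g x - g y)) (mem_univ x)]
    simp
  -- key energy identity for perturbation at x
  have key : ∀ t : ℝ, dEnergy w (Function.update g x (g x + t))
      = dEnergy w g + (2*t*L + t^2*c) := by
    intro t
    have hgx : Function.update g x (g x + t) x = g x + t := Function.update_self x _ g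
    have hga : ∀ a ∈ univ.erase x, Function.update g x (g x + t) a = g a := fun a ha =>
      Function.update_of_ne (Finset.mem_erase.1 ha).1 _ g
    have e1 : ∑ b ∈ univ.erase x,
        w x b * (Function.update g x (g x + t) x - Function.update g x (g x + t) b)^2
        = ∑ b ∈ univ.erase x, w x b * ((g x + t) - g b)^2 :=
      Finset.sum_congr rfl fun b hb => by rw [hgx, hga b hb]
    have e2 : ∑ a ∈ univ.erase x,
        (w a x * (Function.update g x (g x + t) a - Function.update g x (g x + t) x)^2
          + ∑ b ∈ univ.erase x,
              w a b * (Function.update g x (g x + t) a - Function.update g x (g x + t) b)^2)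
        = ∑ a ∈ univ.erase x, (w a x * (g a - (g x + t))^2
          + ∑ b ∈ univ.erase x, w a b * (g a - g b)^2) := by
      refine Finset.sum_congr rfl fun a ha => ?_
      rw [hgx, hga a ha]
      congr 1
      exact Finset.sum_congr rfl fun b hb => by rw [hga b hb]
    unfold dEnergy
    rw [split, split, lapE, hc, e1, e2]
    have comb2 : (∑ b ∈ univ.erase x, w x b * ((g x + t) - g b)^2)
        + (∑ a ∈ univ.erase x, (w a x * (g a - (g x + t))^2
            + ∑ b ∈ univ.erase x, w a b * (g a - g b)^2))
      = (∑ b ∈ univ.erase x, w x b * (g x - g b)^2)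
        + (∑ a ∈ univ.erase x, (w a x * (g a - g x)^2
            + ∑ b ∈ univ.erase x, w a b * (g a - g b)^2))
        + (4*t*(∑ b ∈ univ.erase x, w x b * (g x - g b))
            + 2*t^2 * ∑ b ∈ univ.erase x, w x b) := by
      rw [Finset.mul_sum, Finset.mul_sum, ← Finset.sum_add_distrib,
        ← Finset.sum_add_distrib, ← Finset.sum_add_distrib, ← Finset.sum_add_distrib]
      refine Finset.sum_congr rfl fun b hb => ?_
      rw [hsym b x]
      ring
    simp only [sub_self]
    linear_combination (1/2) * comb2
  have hzero : ∀ m : Fin k, m ≠ i → u m x = 0 := by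
    intro m hm
    rcases mul_eq_zero.1 (hdisj i m (Ne.symm hm) x) with h | h
    · exact absurd h (ne_of_gt hpos)
    · exact h
  -- the perturbed competitor is admissible for t ≥ -g x
  have adm : ∀ t : ℝ, -g x ≤ t →
      Adm Γ φ (fun j => if j = i then Function.update g x (g x + t) else u j) := by
    intro t ht
    refine ⟨?_, ?_, ?_⟩
    · intro j y hy
      dsimp only
      by_cases hji : j = i
      · subst hji
        rw [if_pos rfl, Function.update_of_ne (by rintro rfl; exact hxΓ hy) _ g]
        exact hbd j y hy
      · simp only [if_neg hji]; exact hbd j y hy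
    · intro j y
      dsimp only
      by_cases hji : j = i
      · subst hji
        rw [if_pos rfl]
        by_cases hyx : y = x
        · subst hyx; rw [Function.update_self]; linarith
        · rw [Function.update_of_ne hyx]; exact hnn' _ y
      · simp only [if_neg hji]; exact hnn' j y
    · intro j j' hjj' y
      dsimp only
      by_cases hyx : y = x
      · subst hyx
        by_cases hji : j = i
        · subst hji
          rw [if_pos rfl, if_neg (Ne.symm hjj'), hzero j' (Ne.symm hjj'), mul_zero]
        · rw [if_neg hji, hzero j hji, zero_mul]
      · have hv : ∀ m : Fin k,
            (if m = i then Function.update g x (g x + t) else u m) y = u m y := by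
          intro m
          by_cases hmi : m = i
          · subst hmi; rw [if_pos rfl, Function.update_of_ne hyx]
          · rw [if_neg hmi]
        simp only [hv]
        exact hdisj j j' hjj' y
  -- minimality gives the variational inequality
  have varineq : ∀ t : ℝ, -g x ≤ t → 0 ≤ 2*t*L + t^2*c := by
    intro t ht
    have h1 := hmin _ (adm t ht)
    have h2 : ∑ j, dEnergy w ((fun j => if j = i then Function.update g x (g x + t)
        else u j) j) = ∑ j, dEnergy w (u j) + (2*t*L + t^2*c) := by
      have : ∀ j : Fin k, dEnergy w ((fun j => if j = i then Function.update g x (g x + t)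
          else u j) j) = dEnergy w (u j) + if j = i then 2*t*L + t^2*c else 0 := by
        intro j
        dsimp only
        by_cases hji : j = i
        · subst hji
          rw [if_pos rfl, if_pos rfl, key t]
        · rw [if_neg hji, if_neg hji, add_zero]
      rw [Finset.sum_congr rfl fun j _ => this j, Finset.sum_add_distrib,
        Finset.sum_ite_eq' univ i (fun _ => 2*t*L + t^2*c), if_pos (mem_univ i)]
    rw [h2] at h1
    linarith
  -- conclude L = 0
  rcases lt_trichotomy L 0 with hL | hL | hL
  · exfalso
    have hε : 0 < -L/(c+1) := div_pos (by linarith) (by linarith)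
    set ε : ℝ := -L/(c+1) with hεdef
    have h := varineq ε (by linarith)
    have hεc : ε * c ≤ -L := by
      rw [hεdef, div_mul_eq_mul_div, div_le_iff₀ (by linarith)]
      nlinarith
    nlinarith [mul_le_mul_of_nonneg_left hεc hε.le, mul_neg_of_pos_of_neg hε hL]
  · exact hL
  · exfalso
    have hgx0 : 0 < g x := hpos
    set ε : ℝ := min (g x) (L/(c+1)) with hε
    have hε0 : 0 < ε := lt_min hgx0 (by positivity)
    have hεg : ε ≤ g x := min_le_left _ _
    have h := varineq (-ε) (by linarith)
    have hεc : ε * c ≤ L := by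
      calc ε * c ≤ (L/(c+1)) * c := by
            apply mul_le_mul_of_nonneg_right (min_le_right _ _) hc0
        _ ≤ L := by
            rw [div_mul_eq_mul_div, div_le_iff₀ (by linarith)]
            nlinarith
    nlinarith
end

section
/- Define the segregation projection P on k-tuples of functions on a finite graph X (with boundary Γ and boundary data φ) by: for x ∉ Γ, let i_x be an index maximizing (v_j(x))⁺ over j, and set (Pv)_{i_x}(x) = (v_{i_x}(x))⁺ and (Pv)_j(x) = 0 for j ≠ i_x; for x ∈ Γ set (Pv)_i(x) = φ_i(x). Then for every v and every w in the segregated admissible set S, ‖v − Pv‖ ≤ ‖v − w‖, i.e. Pv is a nearest point of S to v. -/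
open Finset

theorem stmt_7 {X : Type*} [Fintype X] (k : ℕ) (Γ : Set X) (φ : Fin k → X → ℝ)
    (hφ01 : ∀ i, ∀ x ∈ Γ, φ i x = 0 ∨ φ i x = 1)
    (hφseg : ∀ i j, i ≠ j → ∀ x ∈ Γ, φ i x * φ j x = 0)
    (v Pv : Fin k → X → ℝ)
    (hP : ∀ x : X, x ∉ Γ → ∃ i : Fin k,
      (∀ j, max (v j x) 0 ≤ max (v i x) 0) ∧
      Pv i x = max (v i x) 0 ∧ ∀ j, j ≠ i → Pv j x = 0)
    (hPb : ∀ x ∈ Γ, ∀ i, Pv i x = φ i x) :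
    ∀ u : Fin k → X → ℝ, Adm Γ φ u →
      Real.sqrt (∑ i, ∑ x, (v i x - Pv i x) ^ 2)
        ≤ Real.sqrt (∑ i, ∑ x, (v i x - u i x) ^ 2) := by
  rintro u ⟨hub, hupos, huseg⟩
  apply Real.sqrt_le_sqrt
  rw [show (∑ i, ∑ x, (v i x - Pv i x) ^ 2) = ∑ x, ∑ i, (v i x - Pv i x) ^ 2 from
        Finset.sum_comm,
      show (∑ i, ∑ x, (v i x - u i x) ^ 2) = ∑ x, ∑ i, (v i x - u i x) ^ 2 from
        Finset.sum_comm]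
  apply Finset.sum_le_sum
  intro x _
  by_cases hx : x ∈ Γ
  · refine le_of_eq (Finset.sum_congr rfl fun j _ => ?_)
    rw [hPb x hx j, hub j x hx]
  · obtain ⟨i, hmax, hPi, hPj⟩ := hP x hx
    by_cases hu : ∀ j, u j x = 0
    · have h1 : ∑ j, (v j x - Pv j x) ^ 2 ≤ ∑ j, (v j x) ^ 2 := by
        apply Finset.sum_le_sum
        intro j _
        by_cases hj : j = i
        · subst hj
          rw [hPi]
          rcases le_or_gt (v j x) 0 with h | h
          · rw [max_eq_right h]; nlinarith
          · rw [max_eq_left h.le]; nlinarith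
        · rw [hPj j hj, sub_zero]
      have h2 : ∑ j, (v j x) ^ 2 = ∑ j, (v j x - u j x) ^ 2 :=
        Finset.sum_congr rfl fun j _ => by rw [hu j, sub_zero]
      linarith
    · push_neg at hu
      obtain ⟨m, hm⟩ := hu
      have ht : 0 < u m x := (hupos m x).lt_of_ne (Ne.symm hm)
      have huj : ∀ j, j ≠ m → u j x = 0 := fun j hj =>
        (mul_eq_zero.1 (huseg j m hj x)).resolve_right hm
      have key : (v m x) ^ 2 - (max (v i x) 0) ^ 2 ≤ (v m x - u m x) ^ 2 := by
        have h1 : max (v m x) 0 ≤ max (v i x) 0 := hmax m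
        rcases le_or_gt (v m x) 0 with h | h
        · nlinarith [sq_nonneg (max (v i x) 0)]
        · have h2 : v m x ≤ max (v i x) 0 := (le_max_left _ _).trans h1
          nlinarith
      have e1 : ∑ j, ((v j x - Pv j x) ^ 2 - (v j x) ^ 2)
          = -(max (v i x) 0) ^ 2 := by
        rw [Finset.sum_eq_single i]
        · rw [hPi]
          rcases le_or_gt (v i x) 0 with h | h
          · rw [max_eq_right h]; ring
          · rw [max_eq_left h.le]; ring
        · intro j _ hj; rw [hPj j hj]; ring
        · simp
      have e2 : ∑ j, ((v j x - u j x) ^ 2 - (v j x) ^ 2)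
          = (v m x - u m x) ^ 2 - (v m x) ^ 2 := by
        rw [Finset.sum_eq_single m]
        · intro j _ hj; rw [huj j hj]; ring
        · simp
      rw [Finset.sum_sub_distrib] at e1 e2
      nlinarith [sq_nonneg (max (v i x) 0)]
end

section
/- Let u = (u_1,…,u_k) be a minimizer of the segregated Dirichlet energy problem on a finite graph. If x ∈ X \ Γ and u_i(x) > 0, then u_i(x) = A u_i(x) ≥ A u_j(x) for all j ≠ i, where A v(x) = (1/d(x)) Σ_y w_{xy} v(y) is the weighted neighborhood average and d(x) = Σ_y w_{xy} > 0. -/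
open Finset

noncomputable def avg {X : Type*} [Fintype X] (w : X → X → ℝ) (v : X → ℝ) (x : X) : ℝ :=
  (∑ y, w x y * v y) / (∑ y, w x y)

lemma energy_update {X : Type*} [Fintype X] [DecidableEq X] (w : X → X → ℝ)
    (hsym : ∀ x y, w x y = w y x) (v : X → ℝ) (x : X) (s : ℝ) :
    dEnergy w (Function.update v x s) =
      dEnergy w v + ∑ y ∈ univ.erase x, w x y * ((s - v y)^2 - (v x - v y)^2) := by
  set v' := Function.update v x s with hv'
  have hvx : v' x = s := Function.update_self x s v
  have hvy : ∀ y, y ≠ x → v' y = v y := fun y hy => Function.update_of_ne hy s v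
  set F : X → X → ℝ := fun p q => w p q * ((v' p - v' q)^2 - (v p - v q)^2) with hF
  have hFsym : ∀ p q, F p q = F q p := by
    intro p q; simp only [hF]; rw [hsym]; ring
  have hF0 : ∀ p q, p ≠ x → q ≠ x → F p q = 0 := by
    intro p q hp hq; simp only [hF, hvy p hp, hvy q hq]; ring
  have key : ∑ p, ∑ q, F p q = 2 * ∑ y ∈ univ.erase x, F x y := by
    rw [← Finset.add_sum_erase univ (fun p => ∑ q, F p q) (mem_univ x)]
    have h1 : ∀ p ∈ univ.erase x, ∑ q, F p q = F p x := by
      intro p hp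
      have hpx : p ≠ x := (Finset.mem_erase.1 hp).1
      exact Finset.sum_eq_single x (fun q _ hq => hF0 p q hpx hq)
        (fun h => absurd (mem_univ x) h)
    rw [Finset.sum_congr rfl h1]
    have h2 : ∑ p ∈ univ.erase x, F p x = ∑ p ∈ univ.erase x, F x p :=
      Finset.sum_congr rfl (fun p _ => hFsym p x)
    have h3 : ∑ q, F x q = F x x + ∑ q ∈ univ.erase x, F x q :=
      (Finset.add_sum_erase univ (F x) (mem_univ x)).symm
    have h4 : F x x = 0 := by simp only [hF]; ring
    rw [h3, h2, h4]; ring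
  have expand : dEnergy w v' = dEnergy w v + (1/2) * ∑ p, ∑ q, F p q := by
    simp only [dEnergy]
    have : ∀ p q, w p q * (v' p - v' q)^2 = w p q * (v p - v q)^2 + F p q := by
      intro p q; simp only [hF]; ring
    simp only [this, Finset.sum_add_distrib]
    ring
  rw [expand, key]
  have : ∑ y ∈ univ.erase x, F x y
      = ∑ y ∈ univ.erase x, w x y * ((s - v y)^2 - (v x - v y)^2) := by
    refine Finset.sum_congr rfl (fun y hy => ?_)
    have hyx : y ≠ x := (Finset.mem_erase.1 hy).1
    simp only [hF, hvx, hvy y hyx]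
  rw [this]; ring

lemma quad_key (a b t : ℝ) (ha : 0 ≤ a) (ht : 0 < t)
    (h : ∀ s, 0 ≤ s → 0 ≤ a*(s^2 - t^2) - 2*(s-t)*b) : a * t = b := by
  by_contra hc
  set c := a * t - b with hcdef
  have hc0 : c ≠ 0 := fun h0 => hc (by simp only [hcdef] at h0; linarith)
  have hcsq : 0 < c^2 := by positivity
  have habs : 0 < |c| := abs_pos.2 hc0
  set ε := min (t / (2*|c|)) (1/(a+1)) with hε
  have hεpos : 0 < ε := lt_min (by positivity) (by positivity)
  have hεabs : ε * |c| ≤ t/2 := by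
    have h1 : ε ≤ t/(2*|c|) := min_le_left _ _
    calc ε * |c| ≤ t/(2*|c|) * |c| := by gcongr
    _ = t/2 := by field_simp
  have hs : 0 ≤ t - ε*c := by
    have h1 : ε * c ≤ ε * |c| := by
      have := le_abs_self c
      nlinarith
    linarith
  have h2 := h (t - ε*c) hs
  have hb : b = a*t - c := by simp only [hcdef]; ring
  have hexp : a*((t-ε*c)^2 - t^2) - 2*((t-ε*c)-t)*b = ε*(c^2)*(a*ε-2) := by
    rw [hb]; ring
  rw [hexp] at h2
  have haε : a * ε < 2 := by
    have h1 : ε ≤ 1/(a+1) := min_le_right _ _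
    have h2 : a * ε ≤ a * (1/(a+1)) := by gcongr
    have h3 : a * (1/(a+1)) < 1 := by
      rw [mul_one_div, div_lt_one (by linarith)]; linarith
    linarith
  nlinarith [mul_pos (mul_pos hεpos hcsq) (by linarith : (0:ℝ) < 2 - a*ε)]

theorem stmt_9 {X : Type*} [Fintype X] (w : X → X → ℝ)
    (hsym : ∀ x y, w x y = w y x) (hnn : ∀ x y, 0 ≤ w x y)
    (hd : ∀ x : X, 0 < ∑ y, w x y)
    (k : ℕ) (Γ : Set X) (φ : Fin k → X → ℝ)
    (u : Fin k → X → ℝ) (hu : Adm Γ φ u)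
    (hmin : ∀ v : Fin k → X → ℝ, Adm Γ φ v →
      ∑ i, dEnergy w (u i) ≤ ∑ i, dEnergy w (v i)) :
    ∀ (i : Fin k) (x : X), x ∉ Γ → 0 < u i x →
      u i x = avg w (u i) x ∧ ∀ j : Fin k, j ≠ i → avg w (u j) x ≤ avg w (u i) x := by
  classical
  obtain ⟨hbd, hnn', hseg⟩ := hu
  intro i x hxΓ hpos
  have hujx : ∀ j, j ≠ i → u j x = 0 := by
    intro j hj
    rcases mul_eq_zero.1 (hseg i j hj.symm x) with h | h
    · exact absurd h hpos.ne'
    · exact h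
  set t := u i x with ht
  set a := ∑ y ∈ univ.erase x, w x y with hadef
  set b := ∑ y ∈ univ.erase x, w x y * u i y with hbdef
  have ha : 0 ≤ a := Finset.sum_nonneg fun y _ => hnn x y
  have hsplit : ∀ f : X → ℝ, ∑ y, f y = f x + ∑ y ∈ univ.erase x, f y :=
    fun f => (Finset.add_sum_erase univ f (mem_univ x)).symm
  have hdx := hd x
  have hdecomp : ∑ y, w x y = w x x + a := hsplit _
  have hdpos : 0 < w x x + a := hdecomp ▸ hdx
  -- key variational inequality for component i
  have hkey : ∀ s, 0 ≤ s → 0 ≤ a*(s^2 - t^2) - 2*(s-t)*b := by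
    intro s hs
    set g := Function.update (u i) x s with hg
    set v := Function.update u i g with hvdef
    have hvval : ∀ m z, v m z = if m = i then (if z = x then s else u i z) else u m z := by
      intro m z
      simp only [hvdef, hg, Function.update_apply, ite_apply]
    have hadm : Adm Γ φ v := by
      refine ⟨?_, ?_, ?_⟩
      · intro m z hz
        have hzx : z ≠ x := fun h => hxΓ (h ▸ hz)
        rw [hvval]
        by_cases hm : m = i
        · rw [if_pos hm, if_neg hzx, hm]; exact hbd i z hz
        · rw [if_neg hm]; exact hbd m z hz
      · intro m z
        rw [hvval]
        by_cases hm : m = i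
        · rw [if_pos hm]
          by_cases hz : z = x
          · rw [if_pos hz]; exact hs
          · rw [if_neg hz]; exact hnn' i z
        · rw [if_neg hm]; exact hnn' m z
      · intro m l hml z
        by_cases hz : z = x
        · subst hz
          by_cases hm : m = i
          · have hl : l ≠ i := fun h => hml (hm.trans h.symm)
            rw [hvval, hvval, if_pos hm, if_pos rfl, if_neg hl, hujx l hl, mul_zero]
          · rw [hvval m, if_neg hm, hujx m hm, zero_mul]
        · have hall : ∀ m', v m' z = u m' z := by
            intro m'
            rw [hvval]
            by_cases h1 : m' = i
            · rw [if_pos h1, if_neg hz, h1]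
            · rw [if_neg h1]
          rw [hall, hall]
          exact hseg m l hml z
    have hfun : (fun m => dEnergy w (v m))
        = Function.update (fun m => dEnergy w (u m)) i (dEnergy w g) := by
      funext m
      exact Function.apply_update (fun _ f => dEnergy w f) u i g m
    have hsum : ∑ m, dEnergy w (v m)
        = dEnergy w g + ∑ m ∈ univ \ {i}, dEnergy w (u m) := by
      rw [show (∑ m, dEnergy w (v m)) = ∑ m, Function.update (fun m => dEnergy w (u m)) i (dEnergy w g) m from by rw [← hfun]]
      exact Finset.sum_update_of_mem (mem_univ i) _ _
    have husum : ∑ m, dEnergy w (u m)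
        = dEnergy w (u i) + ∑ m ∈ univ \ {i}, dEnergy w (u m) :=
      Finset.sum_eq_add_sum_sdiff_singleton_of_mem (mem_univ i) _
    have hE : dEnergy w g = dEnergy w (u i)
        + ∑ y ∈ univ.erase x, w x y * ((s - u i y)^2 - (t - u i y)^2) :=
      energy_update w hsym (u i) x s
    have hle := hmin v hadm
    rw [hsum, husum, hE] at hle
    have hS : 0 ≤ ∑ y ∈ univ.erase x, w x y * ((s - u i y)^2 - (t - u i y)^2) := by
      linarith
    have heq : ∑ y ∈ univ.erase x, w x y * ((s - u i y)^2 - (t - u i y)^2)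
        = a*(s^2 - t^2) - 2*(s-t)*b := by
      simp only [hadef, hbdef, Finset.sum_mul, Finset.mul_sum, ← Finset.sum_sub_distrib]
      exact Finset.sum_congr rfl fun y _ => by ring
    rw [heq] at hS
    exact hS
  have hab : a * t = b := quad_key a b t ha hpos hkey
  have hsumi : ∑ y, w x y * u i y = w x x * t + b := hsplit _
  have havgi : avg w (u i) x = t := by
    unfold avg
    rw [hsumi, hdecomp, ← hab, div_eq_iff hdpos.ne']
    ring
  refine ⟨havgi.symm, ?_⟩
  intro j hj
  have hujx0 : u j x = 0 := hujx j hj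
  set bj := ∑ y ∈ univ.erase x, w x y * u j y with hbjdef
  -- competitor: move mass from i to j at x
  have hbjb : bj ≤ b := by
    set gi := Function.update (u i) x 0 with hgi
    set gj := Function.update (u j) x t with hgj
    set v := Function.update (Function.update u i gi) j gj with hvdef
    have hij : i ≠ j := fun h => hj h.symm
    have hvval : ∀ m z, v m z = if m = j then (if z = x then t else u j z)
        else if m = i then (if z = x then 0 else u i z) else u m z := by
      intro m z
      simp only [hvdef, hgj, hgi, Function.update_apply, ite_apply]
    have hadm : Adm Γ φ v := by
      refine ⟨?_, ?_, ?_⟩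
      · intro m z hz
        have hzx : z ≠ x := fun h => hxΓ (h ▸ hz)
        rw [hvval]
        by_cases hm : m = j
        · rw [if_pos hm, if_neg hzx, hm]; exact hbd j z hz
        · rw [if_neg hm]
          by_cases hm2 : m = i
          · rw [if_pos hm2, if_neg hzx, hm2]; exact hbd i z hz
          · rw [if_neg hm2]; exact hbd m z hz
      · intro m z
        rw [hvval]
        by_cases hm : m = j
        · rw [if_pos hm]
          by_cases hz : z = x
          · rw [if_pos hz]; exact hpos.le
          · rw [if_neg hz]; exact hnn' j z
        · rw [if_neg hm]
          by_cases hm2 : m = i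
          · rw [if_pos hm2]
            by_cases hz : z = x
            · rw [if_pos hz]
            · rw [if_neg hz]; exact hnn' i z
          · rw [if_neg hm2]; exact hnn' m z
      · intro m l hml z
        by_cases hz : z = x
        · have hval : ∀ m', m' ≠ j → v m' z = 0 := by
            intro m' hm'
            rw [hvval, if_neg hm']
            by_cases h1 : m' = i
            · rw [if_pos h1, if_pos hz]
            · rw [if_neg h1, hz]; exact hujx m' h1
          by_cases hm : m = j
          · have hl : l ≠ j := fun h => hml (hm.trans h.symm)
            rw [hval l hl, mul_zero]
          · rw [hval m hm, zero_mul]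
        · have hall : ∀ m', v m' z = u m' z := by
            intro m'
            rw [hvval]
            by_cases h1 : m' = j
            · rw [if_pos h1, if_neg hz, h1]
            · rw [if_neg h1]
              by_cases h2 : m' = i
              · rw [if_pos h2, if_neg hz, h2]
              · rw [if_neg h2]
          rw [hall, hall]
          exact hseg m l hml z
    have hfun : (fun m => dEnergy w (v m))
        = Function.update (Function.update (fun m => dEnergy w (Function.update u i gi m)) j (dEnergy w gj)) j (dEnergy w gj) := by
      funext m
      rw [Function.update_idem]
      exact Function.apply_update (fun _ f => dEnergy w f) _ j gj m
    have hfun2 : (fun m => dEnergy w (Function.update u i gi m))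
        = Function.update (fun m => dEnergy w (u m)) i (dEnergy w gi) := by
      funext m
      exact Function.apply_update (fun _ f => dEnergy w f) u i gi m
    have hisub : i ∈ univ \ ({j} : Finset (Fin k)) := by
      simp [Finset.mem_sdiff, hij]
    have hsum : ∑ m, dEnergy w (v m)
        = dEnergy w gj + (dEnergy w gi + ∑ m ∈ (univ \ {j}) \ {i}, dEnergy w (u m)) := by
      have e1 : ∑ m, dEnergy w (v m)
          = dEnergy w gj + ∑ m ∈ univ \ {j}, dEnergy w (Function.update u i gi m) := by
        rw [show (∑ m, dEnergy w (v m)) = ∑ m, Function.update (fun m => dEnergy w (Function.update u i gi m)) j (dEnergy w gj) m from by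
          rw [show (fun m => Function.update (fun m => dEnergy w (Function.update u i gi m)) j (dEnergy w gj) m) = (fun m => dEnergy w (v m)) from by
            funext m
            rw [show dEnergy w (v m) = Function.update (fun m' => dEnergy w (Function.update u i gi m')) j (dEnergy w gj) m from
              Function.apply_update (fun _ f => dEnergy w f) _ j gj m]]]
        exact Finset.sum_update_of_mem (mem_univ j) _ _
      rw [e1]
      congr 1
      rw [show (∑ m ∈ univ \ {j}, dEnergy w (Function.update u i gi m))
            = ∑ m ∈ univ \ {j}, Function.update (fun m => dEnergy w (u m)) i (dEnergy w gi) m from by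
          rw [← hfun2]]
      exact Finset.sum_update_of_mem hisub _ _
    have husum : ∑ m, dEnergy w (u m)
        = dEnergy w (u j) + (dEnergy w (u i) + ∑ m ∈ (univ \ {j}) \ {i}, dEnergy w (u m)) := by
      rw [Finset.sum_eq_add_sum_sdiff_singleton_of_mem (mem_univ j)]
      congr 1
      exact Finset.sum_eq_add_sum_sdiff_singleton_of_mem hisub _
    have hEi : dEnergy w gi = dEnergy w (u i)
        + ∑ y ∈ univ.erase x, w x y * ((0 - u i y)^2 - (t - u i y)^2) :=
      energy_update w hsym (u i) x 0
    have hEj : dEnergy w gj = dEnergy w (u j)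
        + ∑ y ∈ univ.erase x, w x y * ((t - u j y)^2 - (u j x - u j y)^2) :=
      energy_update w hsym (u j) x t
    have hle := hmin v hadm
    rw [hsum, husum, hEi, hEj] at hle
    have hS : 0 ≤ ∑ y ∈ univ.erase x, w x y * ((t - u j y)^2 - (u j x - u j y)^2)
        + ∑ y ∈ univ.erase x, w x y * ((0 - u i y)^2 - (t - u i y)^2) := by
      linarith
    have heq : ∑ y ∈ univ.erase x, w x y * ((t - u j y)^2 - (u j x - u j y)^2)
        + ∑ y ∈ univ.erase x, w x y * ((0 - u i y)^2 - (t - u i y)^2)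
        = 2*t*(b - bj) + (a*t^2 - (a*t)*t) := by
      rw [hujx0]
      simp only [hadef, hbdef, hbjdef, Finset.sum_mul, Finset.mul_sum,
        ← Finset.sum_add_distrib, ← Finset.sum_sub_distrib]
      exact Finset.sum_congr rfl fun y _ => by ring
    rw [heq] at hS
    nlinarith
  have hsumj : ∑ y, w x y * u j y = w x x * u j x + bj := hsplit _
  rw [havgi]
  unfold avg
  rw [hsumj, hujx0, hdecomp, mul_zero, zero_add]
  rw [div_le_iff₀ hdpos]
  calc bj ≤ b := hbjb
  _ = a * t := hab.symm
  _ ≤ t * (w x x + a) := by nlinarith [hnn x x, hpos]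
end

section
/- Let u^ε be minimizers of the penalized functional J_ε(u) = Σ_i ‖∇u_i‖² + (1/ε) Σ_{i≠j} Σ_x u_i(x)² u_j(x)² over {u : u_i = φ_i on Γ} on a finite connected graph. Then for any sequence ε_n → 0 there is a subsequence along which u^{ε_n} converges (pointwise on X) to a minimizer of the constrained segregated problem min Σ_i ‖∇u_i‖² subject to u_i = φ_i on Γ, u_i ≥ 0, u_i u_j = 0 pointwise. -/
open Finset

noncomputable def Jpen {X : Type*} [Fintype X] (w : X → X → ℝ) (ε : ℝ) {k : ℕ}
    (u : Fin k → X → ℝ) : ℝ :=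
  ∑ i, dEnergy w (u i) +
    (1 / ε) * ∑ i, ∑ j ∈ Finset.univ.erase i, ∑ x, (u i x) ^ 2 * (u j x) ^ 2

open Filter Topology

/-!
The penalized minimizers satisfy `J_ε(u^ε) ≤ J_ε(v₀) = ∑ᵢ ‖∇v₀ᵢ‖²` for a fixed segregated
competitor `v₀` with the right boundary values, so their Dirichlet energies are bounded and their
interaction terms are `O(ε)`. On a connected graph a bound on the energy bounds the oscillation
along every path, and the boundary values pin the functions down, so the family is bounded and a
subsequence converges. By continuity the limit has zero interaction (it is segregated), keeps the
boundary values and the nonnegativity of the `u^ε` (a maximum principle), and its energy is at most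
that of every admissible competitor, because each `u^ε` already beats every segregated one.
-/

section Graph

variable {X : Type*} [Fintype X] {w : X → X → ℝ}

lemma dEnergy_nonneg (hnn : ∀ x y, 0 ≤ w x y) (u : X → ℝ) : 0 ≤ dEnergy w u := by
  unfold dEnergy
  exact mul_nonneg one_half_pos.le
    (sum_nonneg fun x _ => sum_nonneg fun y _ => mul_nonneg (hnn x y) (sq_nonneg _))

lemma continuous_dEnergy (w : X → X → ℝ) : Continuous (dEnergy w) := by
  unfold dEnergy
  fun_prop

lemma mul_sq_sub_le_two_mul_dEnergy (hnn : ∀ x y, 0 ≤ w x y) (u : X → ℝ) (a b : X) :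
    w a b * (u a - u b) ^ 2 ≤ 2 * dEnergy w u := by
  have hterm : ∀ x y, 0 ≤ w x y * (u x - u y) ^ 2 := fun x y => mul_nonneg (hnn x y) (sq_nonneg _)
  calc w a b * (u a - u b) ^ 2 ≤ ∑ y, w a y * (u a - u y) ^ 2 :=
        single_le_sum (fun y _ => hterm a y) (mem_univ b)
    _ ≤ ∑ x, ∑ y, w x y * (u x - u y) ^ 2 :=
        single_le_sum (f := fun x => ∑ y, w x y * (u x - u y) ^ 2)
          (fun x _ => sum_nonneg fun y _ => hterm x y) (mem_univ a)
    _ = 2 * dEnergy w u := by unfold dEnergy; ring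

lemma abs_sub_le_sqrt_of_dEnergy_le (hnn : ∀ x y, 0 ≤ w x y) {u : X → ℝ} {C : ℝ}
    (hu : dEnergy w u ≤ C) {a b : X} (hab : 0 < w a b) :
    |u a - u b| ≤ √(2 * C / w a b) := by
  apply Real.abs_le_sqrt
  rw [le_div_iff₀ hab]
  linarith [mul_sq_sub_le_two_mul_dEnergy hnn u a b]

lemma exists_abs_sub_le_of_reflTransGen (hnn : ∀ x y, 0 ≤ w x y) (C : ℝ) {x y : X}
    (hxy : Relation.ReflTransGen (fun a b => 0 < w a b) x y) :
    ∃ K, ∀ u : X → ℝ, dEnergy w u ≤ C → |u x - u y| ≤ K := by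
  induction hxy with
  | refl => exact ⟨0, fun u _ => by simp⟩
  | @tail b c _ hbc ih =>
    obtain ⟨K, hK⟩ := ih
    exact ⟨K + √(2 * C / w b c), fun u hu =>
      (abs_sub_le _ _ _).trans (add_le_add (hK u hu) (abs_sub_le_sqrt_of_dEnergy_le hnn hu hbc))⟩

lemma exists_abs_le_add_of_dEnergy_le (hnn : ∀ x y, 0 ≤ w x y)
    (hconn : ∀ x y : X, Relation.ReflTransGen (fun a b => 0 < w a b) x y) (C : ℝ) (x₀ : X) :
    ∃ B : X → ℝ, ∀ u : X → ℝ, dEnergy w u ≤ C → ∀ y, |u y| ≤ |u x₀| + B y := by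
  choose B hB using fun y => exists_abs_sub_le_of_reflTransGen hnn C (hconn x₀ y)
  refine ⟨B, fun u hu y => ?_⟩
  linarith [hB y u hu, abs_sub_abs_le_abs_sub (u y) (u x₀), abs_sub_comm (u y) (u x₀)]

lemma sq_max_zero_sub_max_zero_le (a b : ℝ) : (max a 0 - max b 0) ^ 2 ≤ (a - b) ^ 2 :=
  sq_le_sq.mpr (abs_max_sub_max_le_abs a b 0)

lemma sq_max_zero_sub_max_zero_lt {a b : ℝ} (ha : a < 0) (hba : b ≠ a) :
    (max a 0 - max b 0) ^ 2 < (a - b) ^ 2 := by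
  rw [max_eq_right ha.le]
  rcases le_or_gt b 0 with hb | hb
  · rw [max_eq_right hb]
    nlinarith [sq_pos_of_ne_zero (sub_ne_zero.mpr hba.symm)]
  · rw [max_eq_left hb.le]
    nlinarith

lemma dEnergy_max_zero_le (hnn : ∀ x y, 0 ≤ w x y) (u : X → ℝ) :
    dEnergy w (fun x => max (u x) 0) ≤ dEnergy w u := by
  unfold dEnergy
  gcongr 1 / 2 * ?_
  exact sum_le_sum fun x _ => sum_le_sum fun y _ =>
    mul_le_mul_of_nonneg_left (sq_max_zero_sub_max_zero_le _ _) (hnn x y)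

lemma dEnergy_max_zero_lt (hnn : ∀ x y, 0 ≤ w x y) {u : X → ℝ} {a b : X} (hab : 0 < w a b)
    (ha : u a < 0) (hba : u b ≠ u a) :
    dEnergy w (fun x => max (u x) 0) < dEnergy w u := by
  have hle : ∀ x y, w x y * (max (u x) 0 - max (u y) 0) ^ 2 ≤ w x y * (u x - u y) ^ 2 :=
    fun x y => mul_le_mul_of_nonneg_left (sq_max_zero_sub_max_zero_le _ _) (hnn x y)
  unfold dEnergy
  refine mul_lt_mul_of_pos_left (sum_lt_sum (fun x _ => sum_le_sum fun y _ => hle x y)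
    ⟨a, mem_univ a, sum_lt_sum (fun y _ => hle a y) ⟨b, mem_univ b, ?_⟩⟩) one_half_pos
  exact mul_lt_mul_of_pos_left (sq_max_zero_sub_max_zero_lt ha hba) hab

end Graph

lemma Relation.ReflTransGen.exists_rel_of_not {α : Type*} {r : α → α → Prop} {P : α → Prop}
    {x y : α} (hxy : Relation.ReflTransGen r x y) (hx : P x) (hy : ¬ P y) :
    ∃ a b, r a b ∧ P a ∧ ¬ P b := by
  induction hxy with
  | refl => exact absurd hx hy
  | @tail b c _ hbc ih =>
    by_cases hb : P b
    · exact ⟨b, c, hbc, hb, hy⟩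
    · exact ih hb

lemma exists_subseq_tendsto_of_abs_le {ι κ : Type*} [Countable ι] [Countable κ]
    (u : ℕ → ι → κ → ℝ) (B : ι → κ → ℝ) (hB : ∀ n i x, |u n i x| ≤ B i x) :
    ∃ τ : ℕ → ℕ, StrictMono τ ∧ ∃ g, Tendsto (u ∘ τ) atTop (𝓝 g) := by
  have hS : IsCompact (Set.univ.pi fun i => Set.univ.pi fun x => Set.Icc (-B i x) (B i x)) :=
    isCompact_univ_pi fun _ => isCompact_univ_pi fun _ => isCompact_Icc
  obtain ⟨g, -, τ, hτ, hg⟩ := hS.tendsto_subseq fun n =>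
    Set.mem_univ_pi.mpr fun i => Set.mem_univ_pi.mpr fun x => abs_le.mp (hB n i x)
  exact ⟨τ, hτ, g, hg⟩

section Penalized

variable {X : Type*} [Fintype X] {w : X → X → ℝ} {k : ℕ}

noncomputable def segPenalty (u : Fin k → X → ℝ) : ℝ :=
  ∑ i, ∑ j ∈ univ.erase i, ∑ x, (u i x) ^ 2 * (u j x) ^ 2

lemma Jpen_eq (w : X → X → ℝ) (ε : ℝ) (u : Fin k → X → ℝ) :
    Jpen w ε u = ∑ i, dEnergy w (u i) + (1 / ε) * segPenalty u := rfl

lemma segPenalty_nonneg (u : Fin k → X → ℝ) : 0 ≤ segPenalty u := by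
  unfold segPenalty
  positivity

lemma continuous_segPenalty : Continuous (segPenalty : (Fin k → X → ℝ) → ℝ) := by
  unfold segPenalty
  fun_prop

lemma segPenalty_eq_zero_iff (u : Fin k → X → ℝ) :
    segPenalty u = 0 ↔ ∀ i j, i ≠ j → ∀ x, u i x * u j x = 0 := by
  simp only [segPenalty, ← mul_pow]
  rw [sum_eq_zero_iff_of_nonneg fun _ _ => by positivity]
  refine forall_congr' fun i => ?_
  rw [sum_eq_zero_iff_of_nonneg fun _ _ => by positivity]
  simp only [mem_univ, true_implies, mem_erase, ne_comm (a := i), and_true]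
  refine forall₂_congr fun j _ => ?_
  simp [sum_eq_zero_iff_of_nonneg, sq_nonneg]

lemma segPenalty_max_zero_le (u : Fin k → X → ℝ) :
    segPenalty (fun i x => max (u i x) 0) ≤ segPenalty u := by
  have hsq : ∀ a : ℝ, (max a 0) ^ 2 ≤ a ^ 2 := fun a => by
    simpa using sq_max_zero_sub_max_zero_le a 0
  unfold segPenalty
  refine sum_le_sum fun i _ => sum_le_sum fun j _ => sum_le_sum fun x _ => ?_
  exact mul_le_mul (hsq _) (hsq _) (sq_nonneg _) (sq_nonneg _)

def IsPenMinimizer (w : X → X → ℝ) (Γ : Set X) (φ : Fin k → X → ℝ) (ε : ℝ)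
    (U : Fin k → X → ℝ) : Prop :=
  (∀ i, ∀ x ∈ Γ, U i x = φ i x) ∧
    ∀ v : Fin k → X → ℝ, (∀ i, ∀ x ∈ Γ, v i x = φ i x) → Jpen w ε U ≤ Jpen w ε v

namespace IsPenMinimizer

variable {Γ : Set X} {φ : Fin k → X → ℝ} {ε : ℝ} {U : Fin k → X → ℝ}

lemma Jpen_le_of_segregated (hU : IsPenMinimizer w Γ φ ε U) {v : Fin k → X → ℝ}
    (hvΓ : ∀ i, ∀ x ∈ Γ, v i x = φ i x) (hv : ∀ i j, i ≠ j → ∀ x, v i x * v j x = 0) :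
    Jpen w ε U ≤ ∑ i, dEnergy w (v i) := by
  simpa [Jpen_eq, (segPenalty_eq_zero_iff v).mpr hv] using hU.2 v hvΓ

lemma energy_le (hU : IsPenMinimizer w Γ φ ε U) (hε : 0 < ε) {v : Fin k → X → ℝ}
    (hvΓ : ∀ i, ∀ x ∈ Γ, v i x = φ i x) (hv : ∀ i j, i ≠ j → ∀ x, v i x * v j x = 0) :
    ∑ i, dEnergy w (U i) ≤ ∑ i, dEnergy w (v i) := by
  have := hU.Jpen_le_of_segregated hvΓ hv
  rw [Jpen_eq] at this
  have : 0 ≤ 1 / ε * segPenalty U := mul_nonneg (by positivity) (segPenalty_nonneg U)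
  linarith

lemma segPenalty_le (hU : IsPenMinimizer w Γ φ ε U) (hε : 0 < ε) (hnn : ∀ x y, 0 ≤ w x y)
    {v : Fin k → X → ℝ} (hvΓ : ∀ i, ∀ x ∈ Γ, v i x = φ i x)
    (hv : ∀ i j, i ≠ j → ∀ x, v i x * v j x = 0) :
    segPenalty U ≤ ε * ∑ i, dEnergy w (v i) := by
  have hJ := hU.Jpen_le_of_segregated hvΓ hv
  rw [Jpen_eq] at hJ
  have hE : 0 ≤ ∑ i, dEnergy w (U i) := sum_nonneg fun i _ => dEnergy_nonneg hnn (U i)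
  calc segPenalty U = ε * (1 / ε * segPenalty U) := by field_simp
    _ ≤ ε * ∑ i, dEnergy w (v i) := by gcongr; linarith

lemma Jpen_max_zero_lt (hnn : ∀ x y, 0 ≤ w x y) (hε : 0 < ε) {i : Fin k} {a b : X}
    (hab : 0 < w a b) (ha : U i a < 0) (hba : U i b ≠ U i a) :
    Jpen w ε (fun j x => max (U j x) 0) < Jpen w ε U := by
  rw [Jpen_eq, Jpen_eq]
  have hE : ∑ j, dEnergy w (fun x => max (U j x) 0) < ∑ j, dEnergy w (U j) :=
    sum_lt_sum (fun j _ => dEnergy_max_zero_le hnn (U j))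
      ⟨i, mem_univ i, dEnergy_max_zero_lt hnn hab ha hba⟩
  have hP := mul_le_mul_of_nonneg_left (segPenalty_max_zero_le U) (one_div_pos.mpr hε).le
  linarith

/-- Maximum principle: a negative value would propagate along the connected graph to `Γ`, where
the data are nonnegative, and before that some edge would let the truncation at `0` lower `Jpen`. -/
lemma nonneg (hU : IsPenMinimizer w Γ φ ε U) (hε : 0 < ε) (hnn : ∀ x y, 0 ≤ w x y)
    (hconn : ∀ x y : X, Relation.ReflTransGen (fun a b => 0 < w a b) x y)
    (hΓ : Γ.Nonempty) (hφ : ∀ i, ∀ x ∈ Γ, 0 ≤ φ i x) (i : Fin k) (x : X) : 0 ≤ U i x := by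
  by_contra! hx
  obtain ⟨z, hz⟩ := hΓ
  have hzx : U i z ≠ U i x := by linarith [hU.1 i z hz, hφ i z hz]
  obtain ⟨a, b, hab, ha, hb⟩ :=
    (hconn x z).exists_rel_of_not (P := fun y => U i y = U i x) rfl hzx
  have hV : ∀ j, ∀ y ∈ Γ, max (U j y) 0 = φ j y := fun j y hy => by
    rw [hU.1 j y hy, max_eq_left (hφ j y hy)]
  have hlt := Jpen_max_zero_lt hnn hε hab (ha ▸ hx) (ha ▸ hb)
  exact absurd (hU.2 _ hV) (not_le.mpr hlt)

end IsPenMinimizer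

variable {Γ : Set X} {φ : Fin k → X → ℝ} {ε : ℕ → ℝ} {U : ℕ → Fin k → X → ℝ}
  {u : Fin k → X → ℝ}

lemma adm_of_tendsto_isPenMinimizer (hU : ∀ n, IsPenMinimizer w Γ φ (ε n) (U n))
    (hε : ∀ n, 0 < ε n) (hε0 : Tendsto ε atTop (𝓝 0))
    (hUu : Tendsto U atTop (𝓝 u)) (hnn : ∀ x y, 0 ≤ w x y)
    (hconn : ∀ x y : X, Relation.ReflTransGen (fun a b => 0 < w a b) x y)
    (hΓ : Γ.Nonempty) (hφ : ∀ i, ∀ x ∈ Γ, 0 ≤ φ i x) {v₀ : Fin k → X → ℝ}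
    (hv₀Γ : ∀ i, ∀ x ∈ Γ, v₀ i x = φ i x) (hv₀ : ∀ i j, i ≠ j → ∀ x, v₀ i x * v₀ j x = 0) :
    Adm Γ φ u := by
  have hpt : ∀ i x, Tendsto (fun n => U n i x) atTop (𝓝 (u i x)) :=
    fun i x => tendsto_pi_nhds.mp (tendsto_pi_nhds.mp hUu i) x
  have hεC : Tendsto (fun n => ε n * ∑ i, dEnergy w (v₀ i)) atTop (𝓝 0) := by
    simpa using hε0.mul_const (∑ i, dEnergy w (v₀ i))
  have hseg : segPenalty u = 0 := le_antisymm
    (le_of_tendsto_of_tendsto' ((continuous_segPenalty.tendsto u).comp hUu) hεC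
      fun n => (hU n).segPenalty_le (hε n) hnn hv₀Γ hv₀)
    (segPenalty_nonneg u)
  refine ⟨fun i x hx => ?_, fun i x => ?_, (segPenalty_eq_zero_iff u).mp hseg⟩
  · exact tendsto_nhds_unique ((hpt i x).congr fun n => (hU n).1 i x hx) tendsto_const_nhds
  · exact ge_of_tendsto' (hpt i x) fun n => (hU n).nonneg (hε n) hnn hconn hΓ hφ i x

lemma energy_le_of_tendsto_isPenMinimizer (hU : ∀ n, IsPenMinimizer w Γ φ (ε n) (U n))
    (hε : ∀ n, 0 < ε n) (hUu : Tendsto U atTop (𝓝 u))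
    {v : Fin k → X → ℝ} (hv : Adm Γ φ v) :
    ∑ i, dEnergy w (u i) ≤ ∑ i, dEnergy w (v i) := by
  have hlim := ((continuous_finsetSum univ fun i _ =>
    (continuous_dEnergy w).comp (continuous_apply i)).tendsto u).comp hUu
  exact le_of_tendsto' hlim fun n => (hU n).energy_le (hε n) hv.1 hv.2.2

end Penalized

theorem stmt_11_general {X : Type*} [Fintype X] (w : X → X → ℝ)
    (hnn : ∀ x y, 0 ≤ w x y)
    (hconn : ∀ x y : X, Relation.ReflTransGen (fun a b => 0 < w a b) x y)
    (k : ℕ) (Γ : Set X) (hΓ : Γ.Nonempty) (φ : Fin k → X → ℝ)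
    (hφ01 : ∀ i, ∀ x ∈ Γ, φ i x = 0 ∨ φ i x = 1)
    (hφseg : ∀ i j, i ≠ j → ∀ x ∈ Γ, φ i x * φ j x = 0)
    (uε : ℝ → Fin k → X → ℝ)
    (hmin : ∀ ε : ℝ, 0 < ε →
      (∀ i, ∀ x ∈ Γ, uε ε i x = φ i x) ∧
      ∀ v : Fin k → X → ℝ, (∀ i, ∀ x ∈ Γ, v i x = φ i x) →
        Jpen w ε (uε ε) ≤ Jpen w ε v)
    (εs : ℕ → ℝ) (hεpos : ∀ n, 0 < εs n)
    (hεlim : Filter.Tendsto εs Filter.atTop (nhds 0)) :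
    ∃ τ : ℕ → ℕ, StrictMono τ ∧ ∃ u : Fin k → X → ℝ,
      Adm Γ φ u ∧
      (∀ v : Fin k → X → ℝ, Adm Γ φ v →
        ∑ i, dEnergy w (u i) ≤ ∑ i, dEnergy w (v i)) ∧
      ∀ (i : Fin k) (x : X),
        Filter.Tendsto (fun n => uε (εs (τ n)) i x) Filter.atTop (nhds (u i x)) := by
  have hU : ∀ n, IsPenMinimizer w Γ φ (εs n) (uε (εs n)) := fun n => hmin _ (hεpos n)
  obtain ⟨x₀, hx₀⟩ := hΓ
  obtain ⟨v₀, hv₀Γ, hv₀⟩ : ∃ v₀ : Fin k → X → ℝ,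
      (∀ i, ∀ x ∈ Γ, v₀ i x = φ i x) ∧ ∀ i j, i ≠ j → ∀ x, v₀ i x * v₀ j x = 0 :=
    ⟨fun i => Γ.indicator (φ i), fun i x hx => Set.indicator_of_mem hx _,
      fun i j hij x => by by_cases hx : x ∈ Γ <;> simp [hx, hφseg i j hij]⟩
  have hE : ∀ n i, dEnergy w (uε (εs n) i) ≤ ∑ j, dEnergy w (v₀ j) := fun n i =>
    (single_le_sum (fun j _ => dEnergy_nonneg hnn _) (mem_univ i)).trans
      ((hU n).energy_le (hεpos n) hv₀Γ hv₀)
  obtain ⟨B, hB⟩ := exists_abs_le_add_of_dEnergy_le hnn hconn (∑ j, dEnergy w (v₀ j)) x₀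
  obtain ⟨τ, hτ, u, hu⟩ := exists_subseq_tendsto_of_abs_le (fun n => uε (εs n))
    (fun i y => |φ i x₀| + B y) fun n i y => by simpa [(hU n).1 i x₀ hx₀] using hB _ (hE n i) y
  have hφ : ∀ i, ∀ x ∈ Γ, 0 ≤ φ i x := fun i x hx => by rcases hφ01 i x hx with h | h <;> simp [h]
  refine ⟨τ, hτ, u, ?_, fun v hv => ?_, fun i x => tendsto_pi_nhds.mp (tendsto_pi_nhds.mp hu i) x⟩
  · exact adm_of_tendsto_isPenMinimizer (fun n => hU (τ n)) (fun n => hεpos _)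
      (hεlim.comp hτ.tendsto_atTop) hu hnn hconn ⟨x₀, hx₀⟩ hφ hv₀Γ hv₀
  · exact energy_le_of_tendsto_isPenMinimizer (fun n => hU (τ n)) (fun n => hεpos _) hu hv

theorem stmt_11 {X : Type*} [Fintype X] (w : X → X → ℝ)
    (hsym : ∀ x y, w x y = w y x) (hnn : ∀ x y, 0 ≤ w x y)
    (hconn : ∀ x y : X, Relation.ReflTransGen (fun a b => 0 < w a b) x y)
    (k : ℕ) (Γ : Set X) (hΓ : Γ.Nonempty) (φ : Fin k → X → ℝ)
    (hφ01 : ∀ i, ∀ x ∈ Γ, φ i x = 0 ∨ φ i x = 1)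
    (hφseg : ∀ i j, i ≠ j → ∀ x ∈ Γ, φ i x * φ j x = 0)
    (uε : ℝ → Fin k → X → ℝ)
    (hmin : ∀ ε : ℝ, 0 < ε →
      (∀ i, ∀ x ∈ Γ, uε ε i x = φ i x) ∧
      ∀ v : Fin k → X → ℝ, (∀ i, ∀ x ∈ Γ, v i x = φ i x) →
        Jpen w ε (uε ε) ≤ Jpen w ε v)
    (εs : ℕ → ℝ) (hεpos : ∀ n, 0 < εs n)
    (hεlim : Filter.Tendsto εs Filter.atTop (nhds 0)) :
    ∃ τ : ℕ → ℕ, StrictMono τ ∧ ∃ u : Fin k → X → ℝ,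
      Adm Γ φ u ∧
      (∀ v : Fin k → X → ℝ, Adm Γ φ v →
        ∑ i, dEnergy w (u i) ≤ ∑ i, dEnergy w (v i)) ∧
      ∀ (i : Fin k) (x : X),
        Filter.Tendsto (fun n => uε (εs (τ n)) i x) Filter.atTop (nhds (u i x)) :=
  stmt_11_general w hnn hconn k Γ hΓ φ hφ01 hφseg uε hmin εs hεpos hεlim
end

section
/- On a finite connected graph with nonnegative functions p_i : X → ℝ≥0 and boundary data φ_i ∈ {0,1}, consider the iteration: u_{i,0} is the harmonic extension of φ_i, and u_{i,m+1} solves L u_{i,m+1} + (u_{i,m+1}/ε) Σ_{j≠i} u_{j,m}² = 0 in X \ Γ with u_{i,m+1} = φ_i on Γ. Then all iterates satisfy 0 ≤ u_{i,m} ≤ u_{i,0} ≤ 1. -/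
open Finset

lemma lap_sub {X : Type*} [Fintype X] (w : X → X → ℝ) (u v : X → ℝ) (x : X) :
    lap w (fun y => u y - v y) x = lap w u x - lap w v x := by
  simp only [lap, ← Finset.sum_sub_distrib]
  congr 1; funext y; ring

lemma lap_const_one {X : Type*} [Fintype X] (w : X → X → ℝ) (x : X) :
    lap w (fun _ => (1 : ℝ)) x = 0 := by
  simp [lap]

lemma minprin {X : Type*} [Fintype X] (w : X → X → ℝ)
    (hnn : ∀ x y, 0 ≤ w x y)
    (hconn : ∀ x y : X, Relation.ReflTransGen (fun a b => 0 < w a b) x y)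
    (Γ : Set X) (hΓ : Γ.Nonempty) (u q : X → ℝ)
    (hq : ∀ x, x ∉ Γ → 0 ≤ q x)
    (hsup : ∀ x, x ∉ Γ → 0 ≤ lap w u x + q x * u x)
    (hbd : ∀ x ∈ Γ, 0 ≤ u x) : ∀ x, 0 ≤ u x := by
  obtain ⟨z, hz⟩ := hΓ
  have : Nonempty X := ⟨z⟩
  obtain ⟨x0, -, hmin⟩ := Finset.exists_min_image Finset.univ u Finset.univ_nonempty
  by_contra h
  push_neg at h
  obtain ⟨xneg, hxneg⟩ := h
  have hm : u x0 < 0 := lt_of_le_of_lt (hmin xneg (mem_univ _)) hxneg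
  -- propagation of the minimum
  have prop : ∀ a, a ∉ Γ → u a = u x0 → ∀ b, 0 < w a b → u b = u x0 := by
    intro a ha hua b hab
    have hlap0 : 0 ≤ lap w u a := by
      have h1 := hsup a ha
      have h2 : q a * u a ≤ 0 := mul_nonpos_of_nonneg_of_nonpos (hq a ha) (by rw [hua]; exact hm.le)
      linarith
    have hterm : ∀ y ∈ Finset.univ, w a y * (u a - u y) ≤ 0 := by
      intro y _
      exact mul_nonpos_of_nonneg_of_nonpos (hnn a y)
        (by have := hmin y (mem_univ y); rw [hua]; linarith)
    have hsum0 : lap w u a = 0 := le_antisymm (Finset.sum_nonpos hterm) hlap0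
    have := (Finset.sum_eq_zero_iff_of_nonpos hterm).mp hsum0 b (mem_univ b)
    have hne : w a b ≠ 0 := ne_of_gt hab
    have : u a - u b = 0 := by
      rcases mul_eq_zero.mp this with h' | h'
      · exact absurd h' hne
      · exact h'
    rw [← hua]; linarith
  have reach : ∀ y, Relation.ReflTransGen (fun a b => 0 < w a b) x0 y → u y = u x0 := by
    intro y hy
    induction hy with
    | refl => rfl
    | @tail b c _ hab ih =>
      by_cases hmem : b ∈ Γ
      · exact absurd (hbd _ hmem) (by rw [ih]; exact not_le.mpr hm)
      · exact prop _ hmem ih _ hab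
  have := reach z (hconn x0 z)
  have := hbd z hz
  linarith

theorem stmt_12 {X : Type*} [Fintype X] (w : X → X → ℝ)
    (hsym : ∀ x y, w x y = w y x) (hnn : ∀ x y, 0 ≤ w x y)
    (hconn : ∀ x y : X, Relation.ReflTransGen (fun a b => 0 < w a b) x y)
    (k : ℕ) (Γ : Set X) (hΓ : Γ.Nonempty) (φ : Fin k → X → ℝ)
    (hφ01 : ∀ i, ∀ x ∈ Γ, φ i x = 0 ∨ φ i x = 1)
    (ε : ℝ) (hε : 0 < ε)
    (U : ℕ → Fin k → X → ℝ)
    (h0 : ∀ i : Fin k, (∀ x : X, x ∉ Γ → lap w (U 0 i) x = 0) ∧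
      ∀ x ∈ Γ, U 0 i x = φ i x)
    (hrec : ∀ (m : ℕ) (i : Fin k),
      (∀ x : X, x ∉ Γ → lap w (U (m + 1) i) x +
        (U (m + 1) i x / ε) * ∑ j ∈ Finset.univ.erase i, (U m j x) ^ 2 = 0) ∧
      ∀ x ∈ Γ, U (m + 1) i x = φ i x) :
    ∀ (m : ℕ) (i : Fin k) (x : X),
      0 ≤ U m i x ∧ U m i x ≤ U 0 i x ∧ U 0 i x ≤ 1 := by
  have hφnn : ∀ i, ∀ x ∈ Γ, 0 ≤ φ i x := by
    intro i x hx; rcases hφ01 i x hx with h | h <;> rw [h] <;> norm_num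
  have hφle1 : ∀ i, ∀ x ∈ Γ, φ i x ≤ 1 := by
    intro i x hx; rcases hφ01 i x hx with h | h <;> rw [h] <;> norm_num
  have hU0nn : ∀ (i : Fin k) (x : X), 0 ≤ U 0 i x := by
    intro i
    exact minprin w hnn hconn Γ hΓ (U 0 i) (fun _ => 0)
      (fun x _ => le_refl 0)
      (fun x hx => by rw [(h0 i).1 x hx]; norm_num)
      (fun x hx => by rw [(h0 i).2 x hx]; exact hφnn i x hx)
  have hU0le1 : ∀ (i : Fin k) (x : X), U 0 i x ≤ 1 := by
    intro i x
    have := minprin w hnn hconn Γ hΓ (fun y => (fun _ => (1:ℝ)) y - U 0 i y) (fun _ => 0)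
      (fun x _ => le_refl 0)
      (fun x hx => by
        rw [lap_sub w (fun _ => (1:ℝ)) (U 0 i) x, lap_const_one, (h0 i).1 x hx]; norm_num)
      (fun x hx => by
        simp only []
        rw [(h0 i).2 x hx]
        linarith [hφle1 i x hx]) x
    simpa using this
  have hnnall : ∀ (m : ℕ) (i : Fin k) (x : X), 0 ≤ U m i x := by
    intro m
    induction m with
    | zero => exact hU0nn
    | succ m ih =>
      intro i
      exact minprin w hnn hconn Γ hΓ (U (m + 1) i)
        (fun x => (∑ j ∈ Finset.univ.erase i, (U m j x) ^ 2) / ε)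
        (fun x _ => div_nonneg (Finset.sum_nonneg fun j _ => sq_nonneg _) hε.le)
        (fun x hx => by
          have h := (hrec m i).1 x hx
          have : (∑ j ∈ Finset.univ.erase i, (U m j x) ^ 2) / ε * U (m + 1) i x
              = (U (m + 1) i x / ε) * ∑ j ∈ Finset.univ.erase i, (U m j x) ^ 2 := by ring
          rw [this, h]
        )
        (fun x hx => by rw [(hrec m i).2 x hx]; exact hφnn i x hx)
  have hleU0 : ∀ (m : ℕ) (i : Fin k) (x : X), U m i x ≤ U 0 i x := by
    intro m
    match m with
    | 0 => exact fun i x => le_refl _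
    | m + 1 =>
      intro i x
      have := minprin w hnn hconn Γ hΓ (fun y => U 0 i y - U (m + 1) i y) (fun _ => 0)
        (fun x _ => le_refl 0)
        (fun x hx => by
          rw [lap_sub w (U 0 i) (U (m + 1) i) x, (h0 i).1 x hx]
          have h := (hrec m i).1 x hx
          have hc : 0 ≤ (U (m + 1) i x / ε) * ∑ j ∈ Finset.univ.erase i, (U m j x) ^ 2 :=
            mul_nonneg (div_nonneg (hnnall (m + 1) i x) hε.le)
              (Finset.sum_nonneg fun j _ => sq_nonneg _)
          simp only [zero_mul, add_zero]
          linarith)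
        (fun x hx => by
          rw [(h0 i).2 x hx, (hrec m i).2 x hx]
          linarith) x
      simpa using this
  exact fun m i x => ⟨hnnall m i x, hleU0 m i x, hU0le1 i x⟩
end

section
/- If a k-tuple (u_1,…,u_k) of functions on a finite graph satisfies the fixed-point system u_i(x) = max( A u_i(x) − Σ_{j≠i} A u_j(x), 0 ) for all x ∈ X \ Γ and u_i = φ_i on Γ with segregated boundary data, then u_i(x) · u_j(x) = 0 for all x ∈ X and i ≠ j. -/
open Finset

theorem stmt_18 {X : Type*} [Fintype X] (w : X → X → ℝ)
    (hsym : ∀ x y, w x y = w y x) (hnn : ∀ x y, 0 ≤ w x y)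
    (hd : ∀ x : X, 0 < ∑ y, w x y)
    (k : ℕ) (Γ : Set X) (φ : Fin k → X → ℝ)
    (hφ01 : ∀ i, ∀ x ∈ Γ, φ i x = 0 ∨ φ i x = 1)
    (hφseg : ∀ i j, i ≠ j → ∀ x ∈ Γ, φ i x * φ j x = 0)
    (u : Fin k → X → ℝ)
    (hfix : ∀ (i : Fin k) (x : X), x ∉ Γ →
      u i x = max (avg w (u i) x - ∑ j ∈ Finset.univ.erase i, avg w (u j) x) 0)
    (hbd : ∀ i : Fin k, ∀ x ∈ Γ, u i x = φ i x) :
    ∀ (x : X) (i j : Fin k), i ≠ j → u i x * u j x = 0 := by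
  have hu0 : ∀ (l : Fin k) (x : X), 0 ≤ u l x := by
    intro l x
    by_cases hx : x ∈ Γ
    · rw [hbd l x hx]
      rcases hφ01 l x hx with h | h <;> rw [h] <;> norm_num
    · rw [hfix l x hx]; exact le_max_right _ _
  have ha0 : ∀ (l : Fin k) (x : X), 0 ≤ avg w (u l) x := by
    intro l x
    exact div_nonneg (Finset.sum_nonneg fun y _ => mul_nonneg (hnn x y) (hu0 l y)) (hd x).le
  intro x i j hij
  by_cases hx : x ∈ Γ
  · rw [hbd i x hx, hbd j x hx]; exact hφseg i j hij x hx
  · by_contra h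
    have hi : 0 < u i x := lt_of_le_of_ne (hu0 i x) (fun e => h (by rw [← e]; ring))
    have hj : 0 < u j x := lt_of_le_of_ne (hu0 j x) (fun e => h (by rw [← e]; ring))
    rw [hfix i x hx] at hi
    rw [hfix j x hx] at hj
    have hEi : 0 < avg w (u i) x - ∑ l ∈ Finset.univ.erase i, avg w (u l) x := by
      by_contra hc
      push_neg at hc
      rw [max_eq_right hc] at hi
      exact lt_irrefl 0 hi
    have hEj : 0 < avg w (u j) x - ∑ l ∈ Finset.univ.erase j, avg w (u l) x := by
      by_contra hc
      push_neg at hc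
      rw [max_eq_right hc] at hj
      exact lt_irrefl 0 hj
    have h1 : avg w (u j) x ≤ ∑ l ∈ Finset.univ.erase i, avg w (u l) x :=
      Finset.single_le_sum (fun l _ => ha0 l x)
        (Finset.mem_erase.mpr ⟨hij.symm, Finset.mem_univ j⟩)
    have h2 : avg w (u i) x ≤ ∑ l ∈ Finset.univ.erase j, avg w (u l) x :=
      Finset.single_le_sum (fun l _ => ha0 l x)
        (Finset.mem_erase.mpr ⟨hij, Finset.mem_univ i⟩)
    linarith
end

section
/- Define the iteration u_i^{(t+1)}(x) = max( A u_i^{(t)}(x) − Σ_{j≠i} A u_j^{(t)}(x), 0 ) for x ∈ X \ Γ and u_i^{(t+1)} = φ_i on Γ, starting from a segregated nonnegative initial tuple. Then for every t, the iterates remain segregated: u_i^{(t)}(x) · u_j^{(t)}(x) = 0 for all x ∈ X and all i ≠ j. -/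
open Finset

theorem stmt_19 {X : Type*} [Fintype X] (w : X → X → ℝ)
    (hsym : ∀ x y, w x y = w y x) (hnn : ∀ x y, 0 ≤ w x y)
    (hd : ∀ x : X, 0 < ∑ y, w x y)
    (k : ℕ) (Γ : Set X) (φ : Fin k → X → ℝ)
    (hφ01 : ∀ i, ∀ x ∈ Γ, φ i x = 0 ∨ φ i x = 1)
    (hφseg : ∀ i j, i ≠ j → ∀ x ∈ Γ, φ i x * φ j x = 0)
    (U : ℕ → Fin k → X → ℝ)
    (hinit_nonneg : ∀ (i : Fin k) (x : X), 0 ≤ U 0 i x)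
    (hinit_seg : ∀ (i j : Fin k), i ≠ j → ∀ x : X, U 0 i x * U 0 j x = 0)
    (hrec : ∀ (t : ℕ) (i : Fin k) (x : X), x ∉ Γ →
      U (t + 1) i x = max (avg w (U t i) x - ∑ j ∈ Finset.univ.erase i, avg w (U t j) x) 0)
    (hbd : ∀ (t : ℕ) (i : Fin k), ∀ x ∈ Γ, U (t + 1) i x = φ i x) :
    ∀ (t : ℕ) (i j : Fin k), i ≠ j → ∀ x : X, U t i x * U t j x = 0 := by
  have hnonneg : ∀ t i x, 0 ≤ U t i x := by
    intro t
    induction t with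
    | zero => exact hinit_nonneg
    | succ t ih =>
      intro i x
      by_cases hx : x ∈ Γ
      · rw [hbd t i x hx]
        rcases hφ01 i x hx with h | h <;> simp [h]
      · rw [hrec t i x hx]; exact le_max_right _ _
  have havg : ∀ t (i : Fin k) x, 0 ≤ avg w (U t i) x := fun t i x =>
    div_nonneg (Finset.sum_nonneg fun y _ => mul_nonneg (hnn x y) (hnonneg t i y)) (hd x).le
  intro t
  induction t with
  | zero => exact hinit_seg
  | succ t ih =>
    intro i j hij x
    by_cases hx : x ∈ Γ
    · rw [hbd t i x hx, hbd t j x hx]; exact hφseg i j hij x hx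
    · rw [hrec t i x hx, hrec t j x hx]
      by_contra h
      have hi : 0 < avg w (U t i) x - ∑ l ∈ Finset.univ.erase i, avg w (U t l) x := by
        rcases lt_or_ge 0 (avg w (U t i) x - ∑ l ∈ Finset.univ.erase i, avg w (U t l) x) with
          h' | h'
        · exact h'
        · exact absurd h (by rw [max_eq_right h']; ring_nf; simp)
      have hj : 0 < avg w (U t j) x - ∑ l ∈ Finset.univ.erase j, avg w (U t l) x := by
        rcases lt_or_ge 0 (avg w (U t j) x - ∑ l ∈ Finset.univ.erase j, avg w (U t l) x) with
          h' | h'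
        · exact h'
        · exact absurd h (by rw [max_eq_right h']; ring_nf; simp)
      have h1 : avg w (U t j) x ≤ ∑ l ∈ Finset.univ.erase i, avg w (U t l) x :=
        Finset.single_le_sum (fun l _ => havg t l x)
          (Finset.mem_erase.mpr ⟨hij.symm, Finset.mem_univ j⟩)
      have h2 : avg w (U t i) x ≤ ∑ l ∈ Finset.univ.erase j, avg w (U t l) x :=
        Finset.single_le_sum (fun l _ => havg t l x)
          (Finset.mem_erase.mpr ⟨hij, Finset.mem_univ i⟩)
      linarith
end
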